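/- arXiv:0810.1573 — 2 statements merged into one kernel-verified Lean document; each statement's English description precedes it below -/
import Mathlib

section
/- Let d ≥ 1 be an integer and 0 ≤ σ < 2. Define p(α) = α^{d/2} · (1 - d·√α)^σ for α ∈ [(d+2)^{-2}, d^{-2}]. Then the derivative p'(α) is strictly positive at α = (d+2)^{-2}. -/
open Real

theorem moment_not_monotone_sigma_lt_two (d : ℕ) (hd : 1 ≤ d) (σ : ℝ)
    (hσ0 : 0 ≤ σ) (hσ2 : σ < 2) :
    0 < deriv (fun α : ℝ => α ^ ((d : ℝ) / 2) * (1 - d * Real.sqrt α) ^ σ)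
        ((((d : ℝ) + 2) ^ 2)⁻¹) := by
  set D := (d : ℝ) with hDdef
  have hD : 1 ≤ D := by rw [hDdef]; exact_mod_cast hd
  have hc : (0:ℝ) < D + 2 := by linarith
  set a : ℝ := ((D + 2) ^ 2)⁻¹ with ha
  have ha0 : 0 < a := by positivity
  have hsqrt : Real.sqrt a = (D + 2)⁻¹ := by
    rw [ha, Real.sqrt_inv, Real.sqrt_sq hc.le]
  have hu : 1 - D * Real.sqrt a = 2 / (D + 2) := by
    rw [hsqrt]; field_simp; ring
  have hu0 : 0 < 1 - D * Real.sqrt a := by rw [hu]; positivity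
  have h1 : HasDerivAt (fun α : ℝ => α ^ (D / 2)) ((D / 2) * a ^ (D / 2 - 1)) a :=
    Real.hasDerivAt_rpow_const (Or.inl ha0.ne')
  have hs : HasDerivAt Real.sqrt (1 / (2 * Real.sqrt a)) a := Real.hasDerivAt_sqrt ha0.ne'
  have h2 : HasDerivAt (fun α : ℝ => 1 - D * Real.sqrt α)
      (-(D * (1 / (2 * Real.sqrt a)))) a := by
    simpa using ((hs.const_mul D).const_sub 1)
  have h3 : HasDerivAt (fun y : ℝ => y ^ σ)
      (σ * (1 - D * Real.sqrt a) ^ (σ - 1)) (1 - D * Real.sqrt a) :=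
    Real.hasDerivAt_rpow_const (Or.inl hu0.ne')
  have h4 := h3.comp a h2
  have h5 := h1.mul h4
  simp only [Function.comp_def] at h5
  rw [HasDerivAt.deriv (f := fun α : ℝ => α ^ (D / 2) * (1 - D * Real.sqrt α) ^ σ) h5]
  have hsplit1 : (1 - D * Real.sqrt a) ^ σ
      = (1 - D * Real.sqrt a) ^ (σ - 1) * (1 - D * Real.sqrt a) := by
    rw [← Real.rpow_add_one hu0.ne', sub_add_cancel]
  have hsplit2 : a ^ (D / 2) = a ^ (D / 2 - 1) * a := by
    rw [← Real.rpow_add_one ha0.ne', sub_add_cancel]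
  rw [hsplit1, hsplit2, hsqrt]
  rw [hsqrt] at hu
  rw [hu]
  set P := a ^ (D / 2 - 1) with hP
  set Q := (2 / (D + 2)) ^ (σ - 1) with hQ
  have hP0 : 0 < P := Real.rpow_pos_of_pos ha0 _
  have hQ0 : 0 < Q := Real.rpow_pos_of_pos (by positivity) _
  have key : D / 2 * P * (Q * (2 / (D + 2))) +
      P * a * (σ * Q * -(D * (1 / (2 * (D + 2)⁻¹))))
      = P * Q * (D * (2 - σ) / (2 * (D + 2))) := by
    rw [ha]; field_simp; ring
  rw [key]
  have : 0 < D * (2 - σ) / (2 * (D + 2)) := by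
    apply div_pos (by nlinarith) (by linarith)
  positivity
end

section
/- Let d ≥ 1 be an integer and 0 ≤ σ < 2. Define q(α) = α^{d/2}·[(1 - d√α)^σ + d·(1 - (d+2)√α)^σ] for α ∈ [(d+4)^{-2}, (d+2)^{-2}]. Then q'(α) > 0 at α = (d+4)^{-2}. -/
open Real

lemma key_hasDeriv (x : ℝ) :
    HasDerivAt (fun t : ℝ => (2:ℝ) ^ t * (4 - t) + 4 - 6 * t)
      ((2:ℝ) ^ x * Real.log 2 * (4 - x) + (2:ℝ) ^ x * (0 - 1) + 0 - 6) x := by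
  have h1 : HasDerivAt (fun t : ℝ => (2:ℝ) ^ t) ((2:ℝ) ^ x * Real.log 2) x :=
    (Real.hasStrictDerivAt_const_rpow (by norm_num) x).hasDerivAt
  have h2 : HasDerivAt (fun t : ℝ => (4:ℝ) - t) (0 - 1) x :=
    (hasDerivAt_const x 4).sub (hasDerivAt_id x)
  have h3 := ((h1.mul h2).add_const 4).sub ((hasDerivAt_id x).const_mul 6)
  exact h3.congr_deriv (by beta_reduce; ring)

lemma key_ineq (σ : ℝ) (h0 : 0 ≤ σ) (h2 : σ < 2) :
    0 < (2:ℝ) ^ σ * (4 - σ) + 4 - 6 * σ := by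
  have hanti : StrictAntiOn (fun t : ℝ => (2:ℝ) ^ t * (4 - t) + 4 - 6 * t) (Set.Icc 0 2) := by
    apply strictAntiOn_of_deriv_neg (convex_Icc 0 2)
    · exact fun x _ => (key_hasDeriv x).continuousAt.continuousWithinAt
    · intro x hx
      rw [interior_Icc] at hx
      rw [(key_hasDeriv x).deriv]
      have hL1 : Real.log 2 < 0.6931471808 := Real.log_two_lt_d9
      have hL0 : 0 < Real.log 2 := Real.log_pos (by norm_num)
      have hL2 : 0.6931471803 < Real.log 2 := Real.log_two_gt_d9
      have hx0 : 0 < x := hx.1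
      have hx2 : x < 2 := hx.2
      rcases le_or_gt x 1 with hc | hc
      · have hpow : (2:ℝ) ^ x ≤ (2:ℝ) ^ (1:ℝ) :=
          Real.rpow_le_rpow_of_exponent_le one_le_two hc
        rw [Real.rpow_one] at hpow
        have hpow0 : (0:ℝ) < (2:ℝ) ^ x := Real.rpow_pos_of_pos (by norm_num) x
        nlinarith [mul_le_mul hpow (by nlinarith : Real.log 2 * (4 - x) ≤ 4 * 0.6931471808)
          (mul_nonneg hL0.le (by linarith)) (by norm_num : (0:ℝ) ≤ 2)]
      · have hpow : (2:ℝ) ^ x ≤ (2:ℝ) ^ (2:ℝ) :=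
          Real.rpow_le_rpow_of_exponent_le one_le_two hx2.le
        have h22 : (2:ℝ) ^ (2:ℝ) = 4 := by
          rw [show (2:ℝ) = ((2:ℕ):ℝ) by norm_num, Real.rpow_natCast]; norm_num
        rw [h22] at hpow
        have hpow0 : (0:ℝ) < (2:ℝ) ^ x := Real.rpow_pos_of_pos (by norm_num) x
        nlinarith [mul_le_mul hpow
          (by nlinarith : Real.log 2 * (4 - x) - 1 ≤ 3 * 0.6931471808 - 1)
          (by nlinarith : (0:ℝ) ≤ Real.log 2 * (4 - x) - 1) (by norm_num : (0:ℝ) ≤ 4)]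
  have hval : (2:ℝ) ^ (2:ℝ) * (4 - 2) + 4 - 6 * 2 = 0 := by
    rw [show (2:ℝ) = ((2:ℕ):ℝ) by norm_num, Real.rpow_natCast]; norm_num
  have h2' := hanti (Set.mem_Icc.mpr ⟨h0, h2.le⟩) (Set.mem_Icc.mpr ⟨by norm_num, le_refl 2⟩) h2
  simp only at h2'
  linarith [hval]

theorem two_level_moment_not_monotone (d : ℕ) (hd : 1 ≤ d) (σ : ℝ)
    (hσ0 : 0 ≤ σ) (hσ2 : σ < 2) :
    0 < deriv (fun α : ℝ => α ^ ((d : ℝ) / 2) *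
          ((1 - d * Real.sqrt α) ^ σ + d * (1 - (d + 2) * Real.sqrt α) ^ σ))
        ((((d : ℝ) + 4) ^ 2)⁻¹) := by
  have he1 : (1:ℝ) ≤ (d:ℝ) := by exact_mod_cast hd
  set e : ℝ := (d:ℝ) with he
  have h4 : (0:ℝ) < e + 4 := by linarith
  set s : ℝ := (e + 4)⁻¹ with hs
  have hs0 : 0 < s := inv_pos.mpr h4
  set A : ℝ := ((e + 4) ^ 2)⁻¹ with hA
  have hA0 : 0 < A := by positivity
  have hAs : A = s ^ 2 := by rw [hA, hs, inv_pow]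
  have hsqrt : Real.sqrt A = s := by rw [hAs]; exact Real.sqrt_sq hs0.le
  set a : ℝ := 1 - e * s with ha
  set b : ℝ := 1 - (e + 2) * s with hb
  have ha4 : a = 4 * s := by
    rw [ha, hs]; field_simp; ring
  have hb2 : b = 2 * s := by
    rw [hb, hs]; field_simp; ring
  have ha0 : 0 < a := by rw [ha4]; positivity
  have hb0 : 0 < b := by rw [hb2]; positivity
  -- derivative of sqrt
  have hsq : HasDerivAt Real.sqrt (1 / (2 * s)) A := by
    simpa [hsqrt] using Real.hasDerivAt_sqrt hA0.ne'
  have h_a : HasDerivAt (fun α : ℝ => 1 - e * Real.sqrt α) (-(e * (1 / (2 * s)))) A :=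
    (hsq.const_mul e).const_sub 1
  have h_b : HasDerivAt (fun α : ℝ => 1 - (e + 2) * Real.sqrt α) (-((e + 2) * (1 / (2 * s)))) A :=
    (hsq.const_mul (e + 2)).const_sub 1
  have hfa : (1 : ℝ) - e * Real.sqrt A = a := by rw [hsqrt]
  have hfb : (1 : ℝ) - (e + 2) * Real.sqrt A = b := by rw [hsqrt]
  have h_ar : HasDerivAt (fun α : ℝ => (1 - e * Real.sqrt α) ^ σ)
      (-(e * (1 / (2 * s))) * σ * a ^ (σ - 1)) A := by
    have := h_a.rpow_const (p := σ) (Or.inl (by rw [hfa]; exact ha0.ne'))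
    rwa [hfa] at this
  have h_br : HasDerivAt (fun α : ℝ => (1 - (e + 2) * Real.sqrt α) ^ σ)
      (-((e + 2) * (1 / (2 * s))) * σ * b ^ (σ - 1)) A := by
    have := h_b.rpow_const (p := σ) (Or.inl (by rw [hfb]; exact hb0.ne'))
    rwa [hfb] at this
  have h_sum : HasDerivAt (fun α : ℝ => (1 - e * Real.sqrt α) ^ σ + e * (1 - (e + 2) * Real.sqrt α) ^ σ)
      (-(e * (1 / (2 * s))) * σ * a ^ (σ - 1) + e * (-((e + 2) * (1 / (2 * s))) * σ * b ^ (σ - 1))) A :=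
    h_ar.add (h_br.const_mul e)
  have h_pow : HasDerivAt (fun α : ℝ => α ^ (e / 2)) (e / 2 * A ^ (e / 2 - 1)) A :=
    Real.hasDerivAt_rpow_const (Or.inl hA0.ne')
  have h_tot := h_pow.mul h_sum
  rw [show deriv (fun α : ℝ => α ^ (e / 2) * ((1 - e * Real.sqrt α) ^ σ + e * (1 - (e + 2) * Real.sqrt α) ^ σ)) A = _ from h_tot.deriv]
  -- simplify the value of the inner function at A
  rw [hfa, hfb]
  -- rpow identities
  have hAe : A ^ (e / 2) = A ^ (e / 2 - 1) * A := by
    rw [← Real.rpow_add_one hA0.ne' (e / 2 - 1)]; ring_nf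
  have haσ : a ^ (σ - 1) = a ^ σ / a := Real.rpow_sub_one ha0.ne' σ
  have hbσ : b ^ (σ - 1) = b ^ σ / b := Real.rpow_sub_one hb0.ne' σ
  have hab : a ^ σ = 2 ^ σ * b ^ σ := by
    rw [ha4, hb2, show (4:ℝ) * s = 2 * (2 * s) by ring,
      Real.mul_rpow (by norm_num) (by positivity)]
  have hX0 : 0 < A ^ (e / 2 - 1) := Real.rpow_pos_of_pos hA0 _
  have hP0 : 0 < b ^ σ := Real.rpow_pos_of_pos hb0 _
  have hG : 0 < 2 ^ σ * (4 - σ) + 4 * e - 2 * σ * (e + 2) := by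
    have hk := key_ineq σ hσ0 hσ2
    nlinarith [hk, mul_nonneg (by linarith : (0:ℝ) ≤ e - 1) (by linarith : (0:ℝ) ≤ 4 - 2 * σ)]
  have hEq : e / 2 * A ^ (e / 2 - 1) * (a ^ σ + e * b ^ σ) +
      A ^ (e / 2) * (-(e * (1 / (2 * s))) * σ * a ^ (σ - 1) +
        e * (-((e + 2) * (1 / (2 * s))) * σ * b ^ (σ - 1))) =
      A ^ (e / 2 - 1) * (e / 8) * (b ^ σ * (2 ^ σ * (4 - σ) + 4 * e - 2 * σ * (e + 2))) := by
    rw [hAe, haσ, hbσ, hab, hAs]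
    rw [ha4, hb2]
    field_simp
    ring
  rw [hEq]
  positivity
end
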